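/- arXiv:2108.13689 — 3 statements merged into one kernel-verified Lean document; each statement's English description precedes it below -/
import Mathlib

section
/- Let a, ε, ρ̲, ρ̄, w̄ > 0 with ρ P''(ρ) ≥ 4 ε² w̄² for all ρ ∈ [2ρ̲/3, 3ρ̄/2], where P'' ≥ c_P > 0 on this interval. Then for any (ρ, w) with 2ρ̲/3 ≤ ρ ≤ 3ρ̄/2 and |w| ≤ 3w̄/2, the symmetric 2×2 matrix H = [[a P''(ρ), a ε² w], [a ε² w, a ε² ρ]] satisfies z ⬝ H z ≥ (a c_P / 4) x² + (a ε² ρ̲ / 6) y² for all z = (x, y) ∈ ℝ². -/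
/-- Positive definiteness of the Hessian of the energy density: under the subsonic
condition `ρ P''(ρ) ≥ 4 ε² w̄²` and `P'' ≥ c_P > 0` on `[2ρ̲/3, 3ρ̄/2]`, the quadratic
form of `H = [[a P''(ρ), a ε² w], [a ε² w, a ε² ρ]]` is bounded below by
`(a c_P/4) x² + (a ε² ρ̲/6) y²`. -/
theorem hessian_positive_definite
    (P : ℝ → ℝ) (a ε rhoLo rhoHi wBar c_P : ℝ)
    (ha : 0 < a) (hε : 0 < ε) (hrhoLo : 0 < rhoLo) (hrhoHi : 0 < rhoHi)
    (hwBar : 0 < wBar) (hcP : 0 < c_P)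
    (hP : ∀ ρ ∈ Set.Icc (2 * rhoLo / 3) (3 * rhoHi / 2), c_P ≤ deriv (deriv P) ρ)
    (hsub : ∀ ρ ∈ Set.Icc (2 * rhoLo / 3) (3 * rhoHi / 2),
      4 * ε ^ 2 * wBar ^ 2 ≤ ρ * deriv (deriv P) ρ) :
    ∀ ρ w : ℝ, ρ ∈ Set.Icc (2 * rhoLo / 3) (3 * rhoHi / 2) → |w| ≤ 3 * wBar / 2 →
      ∀ x y : ℝ,
        a * c_P / 4 * x ^ 2 + a * ε ^ 2 * rhoLo / 6 * y ^ 2 ≤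
          a * deriv (deriv P) ρ * x ^ 2 + 2 * (a * ε ^ 2 * w) * x * y
            + a * ε ^ 2 * ρ * y ^ 2 := by
  intro ρ w hρ hw x y
  set p := deriv (deriv P) ρ with hpdef
  have hp : c_P ≤ p := hP ρ hρ
  have hs : 4 * ε ^ 2 * wBar ^ 2 ≤ ρ * p := hsub ρ hρ
  have hppos : 0 < p := lt_of_lt_of_le hcP hp
  have hρlo : 2 * rhoLo / 3 ≤ ρ := hρ.1
  have hρpos : 0 < ρ := by linarith
  have hw2 : w ^ 2 ≤ 9 * wBar ^ 2 / 4 := by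
    have h1 : |w| ^ 2 ≤ (3 * wBar / 2) ^ 2 := by
      apply pow_le_pow_left₀ (abs_nonneg w) hw
    rw [sq_abs] at h1; nlinarith
  have key : 12 * p * (c_P / 4 * x ^ 2 + ε ^ 2 * rhoLo / 6 * y ^ 2) ≤
      12 * p * (p * x ^ 2 + 2 * (ε ^ 2 * w) * x * y + ε ^ 2 * ρ * y ^ 2) := by
    have h1 : 0 ≤ (p - c_P) * (p * x ^ 2) :=
      mul_nonneg (by linarith) (mul_nonneg hppos.le (sq_nonneg x))
    have h2 : 0 ≤ (9 * wBar ^ 2 / 4 - w ^ 2) * (ε ^ 2 * ε ^ 2 * y ^ 2) :=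
      mul_nonneg (by linarith) (mul_nonneg (mul_nonneg (sq_nonneg ε) (sq_nonneg ε)) (sq_nonneg y))
    have h3 : 0 ≤ (ρ * p - 4 * ε ^ 2 * wBar ^ 2) * (ε ^ 2 * y ^ 2) :=
      mul_nonneg (by linarith) (mul_nonneg (sq_nonneg ε) (sq_nonneg y))
    have h4 : 0 ≤ (ρ - 2 * rhoLo / 3) * (p * (ε ^ 2 * y ^ 2)) :=
      mul_nonneg (by linarith) (mul_nonneg hppos.le (mul_nonneg (sq_nonneg ε) (sq_nonneg y)))
    nlinarith [sq_nonneg (3 * p * x + 4 * ε ^ 2 * w * y), h1, h2, h3, h4]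
  have h12p : 0 < 12 * p := by linarith
  have key2 : c_P / 4 * x ^ 2 + ε ^ 2 * rhoLo / 6 * y ^ 2 ≤
      p * x ^ 2 + 2 * (ε ^ 2 * w) * x * y + ε ^ 2 * ρ * y ^ 2 :=
    le_of_mul_le_mul_left key h12p
  nlinarith [mul_le_mul_of_nonneg_left key2 (le_of_lt ha)]
end

section
/- Let (aⁿ), (bⁿ), (dⁿ) be nonnegative sequences for n = 0,…,N, let Δτ > 0, c > 0 with c·Δτ < 1, and suppose for every n ≤ N: aⁿ + Σ_{k=1}^n Δτ dᵏ ≤ a⁰ + bⁿ + c Σ_{k=1}^n Δτ (aᵏ + a^{k-1}). Then for every n ≤ N: aⁿ + Σ_{k=1}^n Δτ dᵏ ≤ a⁰ + bⁿ + c Δτ e^{2ncΔτ/(1-cΔτ)} ( a⁰ + Σ_{k=1}^n e^{(1-2k)cΔτ/(1-cΔτ)} (2a⁰ + bᵏ + b^{k-1}) ). -/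
open Finset

namespace DiscreteGronwallAvg

lemma gronwall_aux (N : ℕ) (a b : ℕ → ℝ) (q r : ℝ)
    (hq0 : 0 < q) (hq1 : q < 1) (hr : r = q / (1 - q))
    (ha0 : 0 ≤ a 0) (hb : ∀ n ≤ N, 0 ≤ b n)
    (hyp : ∀ n ≤ N, a n ≤ a 0 + b n + q * ∑ k ∈ Icc 1 n, (a k + a (k - 1))) :
    ∀ n ≤ N, a n ≤ a 0 + b n + q * Real.exp (2 * (n : ℝ) * r) *
      (a 0 + ∑ k ∈ Icc 1 n, Real.exp ((1 - 2 * (k : ℝ)) * r) * (2 * a 0 + b k + b (k - 1))) := by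
  have h1q : 0 < 1 - q := by linarith
  have hrq : r * (1 - q) = q := by rw [hr]; field_simp
  have hr0 : 0 < r := by rw [hr]; positivity
  have hic : Icc 1 0 = (∅ : Finset ℕ) := Finset.Icc_eq_empty (by omega)
  set B : ℕ → ℝ := fun m => q * Real.exp (2 * (m : ℝ) * r) *
      (a 0 + ∑ k ∈ Icc 1 m, Real.exp ((1 - 2 * (k : ℝ)) * r) * (2 * a 0 + b k + b (k - 1)))
    with hB
  have hB0 : B 0 = q * a 0 := by simp [hB, hic]
  -- exp facts
  have her : r + 1 ≤ Real.exp r := Real.add_one_le_exp r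
  have he2 : Real.exp (2 * r) = Real.exp r * Real.exp r := by
    rw [← Real.exp_add]; congr 1; ring
  have hqer : r ≤ q * Real.exp r := by
    nlinarith [mul_nonneg hq0.le (sub_nonneg.mpr her)]
  have he2r : 1 + 2 * r ≤ Real.exp (2 * r) := by
    nlinarith [mul_le_mul her her (by positivity : (0:ℝ) ≤ r + 1) (Real.exp_pos r).le,
      sq_nonneg r]
  -- recursion
  have hBrec : ∀ m : ℕ, B (m + 1) = Real.exp (2 * r) * B m
      + q * Real.exp r * (2 * a 0 + b (m + 1) + b m) := by
    intro m
    have h1 : (1 : ℕ) ≤ m + 1 := Nat.succ_le_succ (Nat.zero_le m)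
    have e1 : Real.exp (2 * ((m : ℝ) + 1) * r)
        = Real.exp (2 * r) * Real.exp (2 * (m : ℝ) * r) := by
      rw [← Real.exp_add]; congr 1; ring
    have e2 : Real.exp (2 * ((m : ℝ) + 1) * r) * Real.exp ((1 - 2 * ((m : ℝ) + 1)) * r)
        = Real.exp r := by
      rw [← Real.exp_add]; congr 1; ring
    simp only [hB, Finset.sum_Icc_succ_top h1]
    push_cast
    linear_combination
      (q * (a 0 + ∑ k ∈ Icc 1 m, Real.exp ((1 - 2 * (k : ℝ)) * r) * (2 * a 0 + b k + b (k - 1)))) * e1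
      + (q * (2 * a 0 + b (m + 1) + b m)) * e2
  -- nonnegativity of B
  have hBnn : ∀ m ≤ N, 0 ≤ B m := by
    intro m hm
    apply mul_nonneg (mul_nonneg hq0.le (Real.exp_pos _).le)
    apply add_nonneg ha0
    apply Finset.sum_nonneg
    intro k hk
    have hkN : k ≤ N := le_trans (mem_Icc.mp hk).2 hm
    have hk1 : k - 1 ≤ N := le_trans (Nat.sub_le k 1) hkN
    have := hb k hkN
    have := hb (k - 1) hk1
    positivity
  -- the star inequality
  have hQ : ∀ m : ℕ, m + 1 ≤ N →
      q * a 0 + r * (1 + q) * a 0 + r * b (m + 1)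
        + 2 * r * (∑ k ∈ Icc 1 m, (a 0 + b k + B k)) ≤ B (m + 1) := by
    intro m
    induction m with
    | zero =>
      intro h1
      have hb0 := hb 0 (Nat.zero_le N)
      have hb1 := hb 1 h1
      rw [hBrec 0, hB0, hic, Finset.sum_empty]
      have he2r1 : (1:ℝ) ≤ Real.exp (2 * r) := Real.one_le_exp (by positivity)
      nlinarith [mul_nonneg (sub_nonneg.mpr he2r1) (mul_nonneg hq0.le ha0),
        mul_nonneg (sub_nonneg.mpr hqer) ha0,
        mul_nonneg (sub_nonneg.mpr hqer) hb1,
        mul_nonneg (mul_nonneg hq0.le (Real.exp_pos r).le) hb0,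
        mul_nonneg (mul_nonneg h1q.le hr0.le) ha0]
    | succ m ih =>
      intro h2
      have h1 : m + 1 ≤ N := Nat.le_of_succ_le h2
      have ih' := ih h1
      have hbm1 := hb (m + 1) h1
      have hbm2 := hb (m + 2) h2
      have hBp := hBnn (m + 1) h1
      rw [Finset.sum_Icc_succ_top (Nat.succ_le_succ (Nat.zero_le m)), hBrec (m + 1)]
      nlinarith [mul_nonneg (sub_nonneg.mpr he2r) hBp,
        mul_nonneg (sub_nonneg.mpr hqer) hbm1,
        mul_nonneg (sub_nonneg.mpr hqer) hbm2,
        mul_nonneg (sub_nonneg.mpr hqer) ha0]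
  -- splitting the sum in the hypothesis
  have hsplit : ∀ m : ℕ, ∑ k ∈ Icc 1 (m + 1), (a k + a (k - 1))
      = a (m + 1) + a 0 + 2 * ∑ k ∈ Icc 1 m, a k := by
    intro m
    induction m with
    | zero => simp [hic]
    | succ m ih =>
      rw [Finset.sum_Icc_succ_top (Nat.succ_le_succ (Nat.zero_le (m+1))), ih,
        Finset.sum_Icc_succ_top (Nat.succ_le_succ (Nat.zero_le m))]
      simp only [Nat.add_sub_cancel]
      ring
  -- main strong induction
  have main : ∀ n, n ≤ N → a n ≤ a 0 + b n + B n := by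
    intro n
    induction n using Nat.strong_induction_on with
    | _ n IH =>
      intro hn
      cases n with
      | zero =>
        have h := hyp 0 (Nat.zero_le N)
        rw [hic, Finset.sum_empty] at h
        have hB0' := hBnn 0 (Nat.zero_le N)
        linarith
      | succ m =>
        have h := hyp (m + 1) hn
        rw [hsplit m] at h
        have hT : ∑ k ∈ Icc 1 m, a k ≤ ∑ k ∈ Icc 1 m, (a 0 + b k + B k) := by
          apply Finset.sum_le_sum
          intro k hk
          have hkm : k ≤ m := (mem_Icc.mp hk).2
          exact IH k (Nat.lt_succ_of_le hkm) (le_trans hkm (Nat.le_of_succ_le hn))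
        have hQ' := hQ m hn
        set T := ∑ k ∈ Icc 1 m, (a 0 + b k + B k) with hTdef
        have hTq : q * (∑ k ∈ Icc 1 m, a k) ≤ q * T :=
          mul_le_mul_of_nonneg_left hT hq0.le
        have E2 : 2 * q * T = (1 - q) * (2 * r * T) := by
          linear_combination (-2 * T) * hrq
        have step : (1 - q) * (2 * r * T)
            ≤ (1 - q) * (B (m + 1) - (q * a 0 + r * (1 + q) * a 0 + r * b (m + 1))) :=
          mul_le_mul_of_nonneg_left (by linarith) h1q.le
        have E3 : (1 - q) * (B (m + 1) - (q * a 0 + r * (1 + q) * a 0 + r * b (m + 1)))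
            = (1 - q) * B (m + 1) - (1 - q) * q * a 0 - q * (1 + q) * a 0 - q * b (m + 1) := by
          linear_combination (-((1 + q) * a 0 + b (m + 1))) * hrq
        have hfinal : 2 * q * T ≤ (1 - q) * B (m + 1) - (1 - q) * q * a 0
            - q * (1 + q) * a 0 - q * b (m + 1) := by
          rw [E2]; linarith [step, E3.le, E3.ge]
        have key : (1 - q) * a (m + 1) ≤ (1 - q) * (a 0 + b (m + 1) + B (m + 1)) := by
          nlinarith [h, hTq, hfinal]
        exact (mul_le_mul_iff_right₀ h1q).mp key
  exact main
/-- Discrete Gronwall lemma with two-point averaging on the right-hand side. -/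
theorem discrete_gronwall
    (N : ℕ) (a b d : ℕ → ℝ) (Δτ c : ℝ)
    (hΔτ : 0 < Δτ) (hc : 0 < c) (hcΔτ : c * Δτ < 1)
    (ha : ∀ n ≤ N, 0 ≤ a n) (hb : ∀ n ≤ N, 0 ≤ b n) (hd : ∀ n ≤ N, 0 ≤ d n)
    (hyp : ∀ n ≤ N,
      a n + ∑ k ∈ Finset.Icc 1 n, Δτ * d k ≤
        a 0 + b n + c * ∑ k ∈ Finset.Icc 1 n, Δτ * (a k + a (k - 1))) :
    ∀ n ≤ N,
      a n + ∑ k ∈ Finset.Icc 1 n, Δτ * d k ≤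
        a 0 + b n + c * Δτ * Real.exp (2 * n * c * Δτ / (1 - c * Δτ)) *
          (a 0 + ∑ k ∈ Finset.Icc 1 n,
            Real.exp ((1 - 2 * (k : ℝ)) * c * Δτ / (1 - c * Δτ)) *
              (2 * a 0 + b k + b (k - 1))) := by
  have hq0 : 0 < c * Δτ := mul_pos hc hΔτ
  have h1q : 0 < 1 - c * Δτ := by linarith
  set q : ℝ := c * Δτ with hqdef
  set r : ℝ := q / (1 - q) with hrdef
  set a' : ℕ → ℝ := fun n => a n + ∑ k ∈ Icc 1 n, Δτ * d k with ha'
  have hic : Icc 1 0 = (∅ : Finset ℕ) := Finset.Icc_eq_empty (by omega)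
  have ha'0 : a' 0 = a 0 := by simp [ha', hic]
  have hD : ∀ m ≤ N, (0:ℝ) ≤ ∑ k ∈ Icc 1 m, Δτ * d k := by
    intro m hm
    apply Finset.sum_nonneg
    intro k hk
    exact mul_nonneg hΔτ.le (hd k (le_trans (mem_Icc.mp hk).2 hm))
  have hyp' : ∀ n ≤ N, a' n ≤ a' 0 + b n + q * ∑ k ∈ Icc 1 n, (a' k + a' (k - 1)) := by
    intro n hn
    have h := hyp n hn
    have hsum : c * ∑ k ∈ Icc 1 n, Δτ * (a k + a (k - 1))
        = q * ∑ k ∈ Icc 1 n, (a k + a (k - 1)) := by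
      rw [← Finset.mul_sum, hqdef]; ring
    have hmono : ∑ k ∈ Icc 1 n, (a k + a (k - 1)) ≤ ∑ k ∈ Icc 1 n, (a' k + a' (k - 1)) := by
      apply Finset.sum_le_sum
      intro k hk
      have hkN : k ≤ N := le_trans (mem_Icc.mp hk).2 hn
      have h1 := hD k hkN
      have h2 := hD (k - 1) (le_trans (Nat.sub_le k 1) hkN)
      simp only [ha']
      linarith
    rw [ha'0]
    calc a' n ≤ a 0 + b n + c * ∑ k ∈ Icc 1 n, Δτ * (a k + a (k - 1)) := h
      _ = a 0 + b n + q * ∑ k ∈ Icc 1 n, (a k + a (k - 1)) := by rw [hsum]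
      _ ≤ a 0 + b n + q * ∑ k ∈ Icc 1 n, (a' k + a' (k - 1)) := by
          have := mul_le_mul_of_nonneg_left hmono hq0.le
          linarith
  have ha'0nn : 0 ≤ a' 0 := by rw [ha'0]; exact ha 0 (Nat.zero_le N)
  have key := gronwall_aux N a' b q r hq0 hcΔτ hrdef ha'0nn hb hyp'
  intro n hn
  have := key n hn
  rw [ha'0] at this
  have hexp1 : Real.exp (2 * (n:ℝ) * c * Δτ / (1 - c * Δτ)) = Real.exp (2 * (n:ℝ) * r) := by
    congr 1
    rw [hrdef, hqdef]
    ring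
  have hexp2 : ∀ k : ℕ, Real.exp ((1 - 2 * (k : ℝ)) * c * Δτ / (1 - c * Δτ))
      = Real.exp ((1 - 2 * (k : ℝ)) * r) := by
    intro k
    congr 1
    rw [hrdef, hqdef]
    ring
  simp only [ha'] at this
  calc a n + ∑ k ∈ Finset.Icc 1 n, Δτ * d k
      ≤ a 0 + b n + q * Real.exp (2 * (n:ℝ) * r) *
        (a 0 + ∑ k ∈ Icc 1 n, Real.exp ((1 - 2 * (k : ℝ)) * r) * (2 * a 0 + b k + b (k - 1))) := this
    _ = a 0 + b n + c * Δτ * Real.exp (2 * n * c * Δτ / (1 - c * Δτ)) *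
          (a 0 + ∑ k ∈ Finset.Icc 1 n,
            Real.exp ((1 - 2 * (k : ℝ)) * c * Δτ / (1 - c * Δτ)) *
              (2 * a 0 + b k + b (k - 1))) := by
        simp only [hexp1, hexp2, hqdef]
end DiscreteGronwallAvg
end

section
/- Let H : ℝᵈ → ℝ be C² and define the relative energy h(u | û) := H(u) − H(û) − ∇H(û)·(u − û). Then for sequences uⁿ, u^{n-1}, ûⁿ, û^{n-1} ∈ ℝᵈ and Δτ > 0, the backward difference of the relative energy admits the exact decomposition: (h(uⁿ|ûⁿ) − h(u^{n-1}|û^{n-1}))/Δτ = ⟨∇H(uⁿ) − ∇H(ûⁿ), d̄uⁿ − d̄ûⁿ⟩ + ⟨∇H(uⁿ) − ∇H(ûⁿ) − H''(ûⁿ)(uⁿ − ûⁿ), d̄ûⁿ⟩ − (Δτ/2)⟨H''(u*) d̄uⁿ, d̄uⁿ⟩ + (Δτ/2)⟨H''(û*) d̄ûⁿ, d̄ûⁿ⟩ − ⟨d̄(∇H(ûⁿ)) − H''(ûⁿ) d̄ûⁿ, uⁿ − ûⁿ⟩ + Δτ ⟨d̄(∇H(ûⁿ)), d̄uⁿ −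 d̄ûⁿ⟩, for suitable intermediate points u* on the segment [u^{n-1}, uⁿ] and û* on [û^{n-1}, ûⁿ], where d̄vⁿ := (vⁿ − v^{n-1})/Δτ. -/
open scoped RealInnerProductSpace

section Aux

variable {E : Type*} [NormedAddCommGroup E] [InnerProductSpace ℝ E] [CompleteSpace E]

/-- Second-order Taylor expansion with Lagrange remainder along a segment. -/
lemma taylor_second_order (H : E → ℝ) (g : E → E) (Q : E → (E →L[ℝ] E))
    (hg : ∀ u, HasGradientAt H (g u) u) (hQ : ∀ u, HasFDerivAt g (Q u) u)
    (a b : E) :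
    ∃ c ∈ segment ℝ a b,
      H b - H a - ⟪g a, b - a⟫ = (1 / 2) * ⟪Q c (b - a), b - a⟫ := by
  set w : E := b - a with hw
  set k : ℝ := H b - H a - ⟪g a, w⟫ with hk
  set γ : ℝ → E := fun t => a + t • w with hγ
  have hγd : ∀ t : ℝ, HasDerivAt γ w t := by
    intro t
    simpa [hγ] using ((hasDerivAt_id t).smul_const w).const_add a
  have hφ : ∀ t : ℝ, HasDerivAt (fun s => H (γ s)) ⟪g (γ t), w⟫ t := by
    intro t
    have := ((hg (γ t)).hasFDerivAt).comp_hasDerivAt t (hγd t)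
    exact this
  have hgφ : ∀ t : ℝ, HasDerivAt (fun s => ⟪g (γ s), w⟫) ⟪Q (γ t) w, w⟫ t := by
    intro t
    have h1 : HasDerivAt (fun s => g (γ s)) (Q (γ t) w) t :=
      (hQ (γ t)).comp_hasDerivAt t (hγd t)
    have h2 := h1.inner ℝ (hasDerivAt_const t w)
    simpa using h2
  set f : ℝ → ℝ := fun t => H (γ t) - H a - t * ⟪g a, w⟫ - t ^ 2 * k with hf
  set f1 : ℝ → ℝ := fun t => ⟪g (γ t), w⟫ - ⟪g a, w⟫ - 2 * t * k with hf1
  set f2 : ℝ → ℝ := fun t => ⟪Q (γ t) w, w⟫ - 2 * k with hf2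
  have hdf : ∀ t : ℝ, HasDerivAt f (f1 t) t := by
    intro t
    have h1 : HasDerivAt (fun s : ℝ => s * ⟪g a, w⟫) ⟪g a, w⟫ t := by
      simpa using (hasDerivAt_id t).mul_const ⟪g a, w⟫
    have h2 : HasDerivAt (fun s : ℝ => s ^ 2 * k) (2 * t * k) t := by
      have := (hasDerivAt_pow 2 t).mul_const k
      simpa using this
    have := (((hφ t).sub_const (H a)).sub h1).sub h2
    exact this
  have hdf1 : ∀ t : ℝ, HasDerivAt f1 (f2 t) t := by
    intro t
    have h2 : HasDerivAt (fun s : ℝ => 2 * s * k) (2 * k) t := by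
      have := ((hasDerivAt_id t).const_mul 2).mul_const k
      simpa using this
    have := (((hgφ t).sub_const ⟪g a, w⟫)).sub h2
    exact this
  have hf0 : f 0 = 0 := by simp [hf, hγ]
  have hfone : f 1 = 0 := by
    have hb : γ 1 = b := by simp [hγ, hw]
    simp only [hf, hb, one_pow, one_mul, hk]
    ring
  obtain ⟨θ₁, hθ₁, hfθ₁⟩ :=
    exists_hasDerivAt_eq_zero (f := f) (f' := f1) (by norm_num : (0:ℝ) < 1)
      (fun x _ => (hdf x).continuousAt.continuousWithinAt) (hf0.trans hfone.symm)
      (fun x _ => hdf x)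
  have hf10 : f1 0 = 0 := by simp [hf1, hγ]
  obtain ⟨θ, hθ, hfθ⟩ :=
    exists_hasDerivAt_eq_zero (f := f1) (f' := f2) hθ₁.1
      (fun x _ => (hdf1 x).continuousAt.continuousWithinAt) (hf10.trans hfθ₁.symm)
      (fun x _ => hdf1 x)
  have hθ01 : θ ∈ Set.Ioo (0:ℝ) 1 := ⟨hθ.1, hθ.2.trans hθ₁.2⟩
  refine ⟨γ θ, ?_, ?_⟩
  · refine ⟨1 - θ, θ, by linarith [hθ01.2], le_of_lt hθ01.1, by ring, ?_⟩
    simp only [hγ, hw]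
    module
  · have : ⟪Q (γ θ) w, w⟫ = 2 * k := by
      have := hfθ
      simp only [hf2] at this
      linarith
    rw [this]; ring

/-- Symmetry of the Hessian. -/
lemma hessian_symm (H : E → ℝ) (g : E → E) (Q : E → (E →L[ℝ] E))
    (hg : ∀ u, HasGradientAt H (g u) u) (hQ : ∀ u, HasFDerivAt g (Q u) u)
    (x v w : E) : ⟪Q x v, w⟫ = ⟪Q x w, v⟫ := by
  set T := (InnerProductSpace.toDual ℝ E).toLinearIsometry.toContinuousLinearMap with hT
  have h2 : HasFDerivAt (fun u => (InnerProductSpace.toDual ℝ E) (g u)) (T.comp (Q x)) x :=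
    T.hasFDerivAt.comp x (hQ x)
  have := second_derivative_symmetric (f := H)
    (f' := fun u => (InnerProductSpace.toDual ℝ E) (g u))
    (fun y => (hg y).hasFDerivAt) h2 v w
  simpa [hT, InnerProductSpace.toDual_apply_apply] using this

end Aux

/-- Exact decomposition of the backward difference of the relative energy
`h(u|û) = H(u) − H(û) − ⟨∇H(û), u − û⟩` for a `C²` function `H`, with intermediate
points on the segments `[u^{n-1}, uⁿ]` and `[û^{n-1}, ûⁿ]` coming from Taylor's
theorem with Lagrange remainder. -/
theorem relative_energy_backward_difference_decomposition
    {d : ℕ} (H : EuclideanSpace ℝ (Fin d) → ℝ)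
    (g : EuclideanSpace ℝ (Fin d) → EuclideanSpace ℝ (Fin d))
    (Q : EuclideanSpace ℝ (Fin d) →
      (EuclideanSpace ℝ (Fin d) →L[ℝ] EuclideanSpace ℝ (Fin d)))
    (hH : ContDiff ℝ 2 H)
    (hg : ∀ u, HasGradientAt H (g u) u)
    (hQ : ∀ u, HasFDerivAt g (Q u) u)
    (Δτ : ℝ) (hΔτ : 0 < Δτ)
    (un un1 vn vn1 : EuclideanSpace ℝ (Fin d)) :
    ∃ ustar ∈ segment ℝ un1 un, ∃ vstar ∈ segment ℝ vn1 vn,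
      ((H un - H vn - ⟪g vn, un - vn⟫) - (H un1 - H vn1 - ⟪g vn1, un1 - vn1⟫)) / Δτ =
        ⟪g un - g vn, Δτ⁻¹ • (un - un1) - Δτ⁻¹ • (vn - vn1)⟫
        + ⟪g un - g vn - Q vn (un - vn), Δτ⁻¹ • (vn - vn1)⟫
        - Δτ / 2 * ⟪Q ustar (Δτ⁻¹ • (un - un1)), Δτ⁻¹ • (un - un1)⟫
        + Δτ / 2 * ⟪Q vstar (Δτ⁻¹ • (vn - vn1)), Δτ⁻¹ • (vn - vn1)⟫
        - ⟪Δτ⁻¹ • (g vn - g vn1) - Q vn (Δτ⁻¹ • (vn - vn1)), un - vn⟫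
        + Δτ * ⟪Δτ⁻¹ • (g vn - g vn1), Δτ⁻¹ • (un - un1) - Δτ⁻¹ • (vn - vn1)⟫ := by
  obtain ⟨ustar, hus, hTu⟩ := taylor_second_order H g Q hg hQ un un1
  obtain ⟨vstar, hvs, hTv⟩ := taylor_second_order H g Q hg hQ vn vn1
  rw [segment_symm] at hus hvs
  refine ⟨ustar, hus, vstar, hvs, ?_⟩
  have hs1 : ⟪Q vn un, vn⟫ = ⟪Q vn vn, un⟫ := hessian_symm H g Q hg hQ vn un vn
  have hs2 : ⟪Q vn un, vn1⟫ = ⟪Q vn vn1, un⟫ := hessian_symm H g Q hg hQ vn un vn1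
  have hs3 : ⟪Q vn vn, vn1⟫ = ⟪Q vn vn1, vn⟫ := hessian_symm H g Q hg hQ vn vn vn1
  have hne : Δτ ≠ 0 := hΔτ.ne'
  have key : (H un - H vn - ⟪g vn, un - vn⟫) - (H un1 - H vn1 - ⟪g vn1, un1 - vn1⟫) =
      ⟪g un - g vn, un - un1 - (vn - vn1)⟫
      + ⟪g un - g vn - Q vn (un - vn), vn - vn1⟫
      - 1 / 2 * ⟪Q ustar (un - un1), un - un1⟫
      + 1 / 2 * ⟪Q vstar (vn - vn1), vn - vn1⟫
      - ⟪g vn - g vn1 - Q vn (vn - vn1), un - vn⟫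
      + ⟪g vn - g vn1, un - un1 - (vn - vn1)⟫ := by
    simp only [map_sub, inner_sub_left, inner_sub_right] at hTu hTv ⊢
    linear_combination -hTu + hTv + hs1 - hs2 + hs3
  simp only [← smul_sub, map_smul, real_inner_smul_left, real_inner_smul_right] at key ⊢
  rw [key]
  field_simp
end
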